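/- (Alternate representation.) One has 𝓐^uni = ⋂_{(s,f)∈𝓟} 𝓐^{s,f}, and for every (s,f) ∈ 𝓟 and every A ∈ 𝓐^uni, α(A) = α^{s,f}(A). -/

import Mathlib

/-!
Put `B = log A` and `g u = ρ_A(eᵘ)`. The substitution `y = eᵘ` turns `ξ_A(e^T, e^y)` into the
average of `g` over `[y, y + T]`, and `g` solves `g' = 1_B - g` with `0 ≤ g ≤ 1`, so this average
differs from the window average `σ_B(T, y)` by at most `1/T`. Hence the `ξ`-sequences of pairs in
`𝓟` are, up to `o(1)`, the window averages `σ_B(T_n, y_n)` along arbitrary `T_n → ∞`, `y_n > 0`.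
If `L(B) = U(B)`, these averages converge to `U(B)` uniformly in the starting point, which also
gives `λ(B) = U(B)`. If `L(B) < U(B)`, windows whose averages approach `L(B)` and `U(B)`,
interleaved, give a pair in `𝓟` along which `ξ` diverges.
-/

open MeasureTheory Filter Set Topology

noncomputable section

namespace UPN

/-- The half line `[0,∞)` viewed as a subset of `ℝ`. -/
def Ray : Set ℝ := Set.Ici 0

/-- The indicator function `1_A`. -/
def ind (A : Set ℝ) : ℝ → ℝ := Set.indicator A fun _ => (1 : ℝ)

/-- The collection `𝓜` of countable unions `⋃ᵢ [a_{2i-1}, a_{2i})` for a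
nondecreasing nonnegative sequence `a`. -/
def Mcal : Set (Set ℝ) :=
  {A | ∃ a : ℕ → ℝ, 0 ≤ a 0 ∧ Monotone a ∧
        A = ⋃ i : ℕ, Set.Ico (a (2 * i)) (a (2 * i + 1))}

/-- The density function `ρ_A`: `ρ_A(0) = 0` and `ρ_A(x) = (1/x)∫₀ˣ 1_A(y) dy`. -/
def rho (A : Set ℝ) (x : ℝ) : ℝ :=
  if x = 0 then 0 else (1 / x) * ∫ y in (0:ℝ)..x, ind A y

/-- The collection `𝓒` of elements of `𝓜` having natural density. -/
def Ccal : Set (Set ℝ) :=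
  {A | A ∈ Mcal ∧ ∃ l : ℝ, Tendsto (rho A) atTop (𝓝 l)}

/-- The natural density `λ(A) = lim_{x→∞} ρ_A(x)`. -/
def lam (A : Set ℝ) : ℝ := limUnder atTop (rho A)

/-- `S_A(x) = m(A ∩ [0,x))`. -/
def Sfn (A : Set ℝ) (x : ℝ) : ℝ := (volume (A ∩ Set.Ico 0 x)).toReal

/-- The thinning operation `A ∘ B = {x : x ∈ A ∧ S_A(x) ∈ B}`. -/
def thin (A B : Set ℝ) : Set ℝ := {x | x ∈ A ∧ Sfn A x ∈ B}

/-- An f-system on `[0,∞)`: a nonempty collection of subsets of `[0,∞)` closed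
under complements (in `[0,∞)`) and finite disjoint unions. -/
structure IsFSystem (F : Set (Set ℝ)) : Prop where
  nonempty : F.Nonempty
  subset_ray : ∀ A ∈ F, A ⊆ Ray
  compl_mem : ∀ A ∈ F, Ray \ A ∈ F
  union_mem : ∀ A ∈ F, ∀ B ∈ F, A ∩ B = ∅ → A ∪ B ∈ F

/-- A probability pair `(F, μ)` on `[0,∞)`: `F` is an f-system and `μ` is a finitely
additive probability measure on `F` with values in `[0,1]` and `μ([0,∞)) = 1`. -/
structure IsProbPair (F : Set (Set ℝ)) (μ : Set ℝ → ℝ) : Prop where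
  fsystem : IsFSystem F
  nonneg : ∀ A ∈ F, 0 ≤ μ A
  le_one : ∀ A ∈ F, μ A ≤ 1
  ray_eq_one : μ Ray = 1
  additive : ∀ A ∈ F, ∀ B ∈ F, A ∩ B = ∅ → μ (A ∪ B) = μ A + μ B

/-- A weakly thinnable pair (WTP). -/
structure IsWTP (F : Set (Set ℝ)) (μ : Set ℝ → ℝ) : Prop where
  pair : IsProbPair F μ
  Ccal_subset : Ccal ⊆ F
  subset_Mcal : F ⊆ Mcal
  P1 : ∀ C ∈ Ccal, ∀ A ∈ F, thin C A ∈ F ∧ μ (thin C A) = μ C * μ A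
  P2 : ∀ A ∈ F, ∀ B ∈ F, (∀ x : ℝ, Sfn B x ≤ Sfn A x) → μ B ≤ μ A
  P3 : ∀ c : ℝ, 0 ≤ c → μ (Set.Ici c) = 1

/-- Coherence of a probability measure `μ` on an f-system `F` on `[0,∞)`. -/
def Coherent (F : Set (Set ℝ)) (μ : Set ℝ → ℝ) : Prop :=
  ∀ (n : ℕ) (a : Fin n → ℝ) (A : Fin n → Set ℝ), (∀ i, A i ∈ F) →
    0 ≤ ⨆ x : Ray, ∑ i, a i * (ind (A i) ↑x - μ (A i))

/-- `σ_A(D,x) = (1/D) ∫_x^{x+D} 1_A(y) dy`. -/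
def sigmaFn (A : Set ℝ) (D x : ℝ) : ℝ := (1 / D) * ∫ y in x..(x + D), ind A y

/-- `U(A) = limsup_{D→∞} sup_{x>0} σ_A(D,x)`. -/
def Ufn (A : Set ℝ) : ℝ :=
  limsup (fun D => ⨆ x : Set.Ioi (0:ℝ), sigmaFn A D ↑x) atTop

/-- `L(A) = liminf_{D→∞} inf_{x>0} σ_A(D,x)`. -/
def Lfn (A : Set ℝ) : ℝ :=
  liminf (fun D => ⨅ x : Set.Ioi (0:ℝ), sigmaFn A D ↑x) atTop

/-- `𝓦^uni = {A ∈ 𝓜 : L(A) = U(A)}`. -/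
def Wuni : Set (Set ℝ) := {A | A ∈ Mcal ∧ Lfn A = Ufn A}

/-- `log(A) = {log a : a ∈ A ∩ [1,∞)}`. -/
def logSet (A : Set ℝ) : Set ℝ := Real.log '' (A ∩ Set.Ici 1)

/-- `𝓐^uni = {A ∈ 𝓜 : log(A) ∈ 𝓦^uni}`. -/
def Auni : Set (Set ℝ) := {A | A ∈ Mcal ∧ logSet A ∈ Wuni}

/-- `α(A) = λ(log(A))`. -/
def alphaFn (A : Set ℝ) : ℝ := lam (logSet A)

/-- `ξ_A(D,x) = (1/log D) ∫_x^{Dx} ρ_A(y)/y dy`. -/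
def xi (A : Set ℝ) (D x : ℝ) : ℝ :=
  (1 / Real.log D) * ∫ y in x..(D * x), rho A y / y

/-- Membership in `𝓟`: `s` is a sequence in `(1,∞)` tending to `∞` and `f` is a
sequence in `(1,∞)`. -/
def memP (s f : ℕ → ℝ) : Prop :=
  (∀ n, 1 < s n) ∧ Tendsto s atTop atTop ∧ ∀ n, 1 < f n

/-- `𝓐^{s,f} = {A ∈ 𝓜 : lim_n ξ_A(s_n,f_n) exists}`. -/
def Asf (s f : ℕ → ℝ) : Set (Set ℝ) :=
  {A | A ∈ Mcal ∧ ∃ l : ℝ, Tendsto (fun n => xi A (s n) (f n)) atTop (𝓝 l)}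

/-- `α^{s,f}(A) = lim_n ξ_A(s_n,f_n)`. -/
def alphasf (s f : ℕ → ℝ) (A : Set ℝ) : ℝ :=
  limUnder atTop fun n => xi A (s n) (f n)

/-- `τ_A(C,j)`; here `j : ℕ` starting from `0` corresponds to the interval
`[C^j, C^{j+1})`, i.e. to the paper's `τ_A(C, j+1)`. -/
def tau (A : Set ℝ) (C : ℝ) (j : ℕ) : ℝ :=
  (1 / (C ^ j * (C - 1))) * ∫ y in (C ^ j : ℝ)..(C ^ (j + 1)), ind A y

/-- `U^*(C,A) = limsup_{n→∞} sup_k (1/n) Σ_{j=k}^{k+n-1} τ_A(C,j)`. -/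
def Ustar (C : ℝ) (A : Set ℝ) : ℝ :=
  limsup (fun n : ℕ => ⨆ k : ℕ, (1 / (n : ℝ)) * ∑ i ∈ Finset.range n, tau A C (k + i)) atTop

section FilterProdTop

variable {α ι : Type*} {l : Filter α}

theorem eventually_prod_top_iff {p : α × ι → Prop} :
    (∀ᶠ q in l ×ˢ ⊤, p q) ↔ ∀ᶠ a in l, ∀ i, p (a, i) :=
  mem_prod_top

theorem frequently_prod_top_iff {p : α × ι → Prop} :
    (∃ᶠ q in l ×ˢ ⊤, p q) ↔ ∃ᶠ a in l, ∃ i, p (a, i) := by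
  simp only [Filter.Frequently, eventually_prod_top_iff, not_exists]

variable {β : Type*} [TopologicalSpace β]

theorem mapClusterPt_uncurry_prod_top {c : β} {S : α → β} {F : α → ι → β}
    (hS : MapClusterPt c l S) (hSF : ∀ᶠ a in l, S a ∈ closure (range (F a))) :
    MapClusterPt c (l ×ˢ ⊤) (Function.uncurry F) := by
  rw [(nhds_basis_opens c).mapClusterPt_iff_frequently] at hS ⊢
  rintro U ⟨hcU, hU⟩
  rw [frequently_prod_top_iff]
  refine ((hS U ⟨hcU, hU⟩).and_eventually hSF).mono fun a ⟨haU, hacl⟩ => ?_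
  obtain ⟨_, hxU, i, rfl⟩ := mem_closure_iff.1 hacl U hU haU
  exact ⟨i, hxU⟩

variable [ConditionallyCompleteLinearOrder β] [OrderTopology β] [Nonempty ι] {m M : β}
  {F : α → ι → β}

theorem mapClusterPt_limsup_iSup [l.NeBot] (hF : ∀ᶠ a in l, ∀ i, F a i ∈ Icc m M) :
    MapClusterPt (limsup (fun a => ⨆ i, F a i) l) (l ×ˢ ⊤) (Function.uncurry F) := by
  have hbdd : ∀ᶠ a in l, BddAbove (range (F a)) :=
    hF.mono fun a ha => ⟨M, forall_mem_range.2 fun i => (ha i).2⟩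
  have hS : MapClusterPt (limsup (fun a => ⨆ i, F a i) l) l (fun a => ⨆ i, F a i) :=
    MapClusterPt.limsup
      (isBoundedUnder_of_eventually_ge ((hF.and hbdd).mono fun a ha =>
        (ha.1 (Classical.arbitrary ι)).1.trans (le_ciSup ha.2 _))).isCoboundedUnder_le
      (isBoundedUnder_of_eventually_le (hF.mono fun a ha => ciSup_le fun i => (ha i).2))
  exact mapClusterPt_uncurry_prod_top hS
    (hbdd.mono fun a ha => csSup_mem_closure (range_nonempty _) ha)

theorem mapClusterPt_liminf_iInf [l.NeBot] (hF : ∀ᶠ a in l, ∀ i, F a i ∈ Icc m M) :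
    MapClusterPt (liminf (fun a => ⨅ i, F a i) l) (l ×ˢ ⊤) (Function.uncurry F) :=
  mapClusterPt_limsup_iSup (β := βᵒᵈ) (m := M) (M := m) (hF.mono fun _ ha i => (ha i).symm)

theorem tendsto_uncurry_prod_top_of_liminf_eq_limsup {c : β}
    (hF : ∀ᶠ a in l, ∀ i, F a i ∈ Icc m M) (hinf : liminf (fun a => ⨅ i, F a i) l = c)
    (hsup : limsup (fun a => ⨆ i, F a i) l = c) :
    Tendsto (Function.uncurry F) (l ×ˢ ⊤) (𝓝 c) := by
  refine tendsto_order.2 ⟨fun b hb => ?_, fun b hb => ?_⟩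
  · have hlt : ∀ᶠ a in l, b < ⨅ i, F a i :=
      eventually_lt_of_lt_liminf (hinf ▸ hb)
        (isBoundedUnder_of_eventually_ge (hF.mono fun a ha => le_ciInf fun i => (ha i).1))
    refine eventually_prod_top_iff.2 ((hlt.and hF).mono fun a ⟨hba, ha⟩ i => ?_)
    exact hba.trans_le (ciInf_le ⟨m, forall_mem_range.2 fun j => (ha j).1⟩ i)
  · have hlt : ∀ᶠ a in l, (⨆ i, F a i) < b :=
      eventually_lt_of_limsup_lt (hsup ▸ hb)
        (isBoundedUnder_of_eventually_le (hF.mono fun a ha => ciSup_le fun i => (ha i).2))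
    refine eventually_prod_top_iff.2 ((hlt.and hF).mono fun a ⟨hab, ha⟩ i => ?_)
    exact (le_ciSup ⟨M, forall_mem_range.2 fun j => (ha j).2⟩ i).trans_lt hab

end FilterProdTop

section Interleave

variable {X : Type*} {l : Filter X}

theorem tendsto_interleave {u v : ℕ → X} (hu : Tendsto u atTop l) (hv : Tendsto v atTop l) :
    Tendsto (fun n => if Even n then u (n / 2) else v (n / 2)) atTop l := by
  have hhalf : Tendsto (· / 2) atTop atTop := Nat.tendsto_div_const_atTop two_ne_zero
  rw [tendsto_def]
  intro s hs
  filter_upwards [hhalf (hu hs), hhalf (hv hs)] with n hun hvn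
  simp only [mem_preimage] at hun hvn ⊢
  split_ifs
  exacts [hun, hvn]

theorem eq_of_mapClusterPt_of_forall_seq {Y : Type*} [TopologicalSpace Y]
    [FirstCountableTopology Y] [T2Space Y] [l.IsCountablyGenerated] {G : X → Y} {a b : Y}
    (ha : MapClusterPt a l G) (hb : MapClusterPt b l G)
    (H : ∀ x : ℕ → X, Tendsto x atTop l → ∃ c, Tendsto (G ∘ x) atTop (𝓝 c)) : a = b := by
  obtain ⟨u, hGu, hu⟩ := ha.exists_seq_tendsto
  obtain ⟨v, hGv, hv⟩ := hb.exists_seq_tendsto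
  obtain ⟨c, hc⟩ := H _ (tendsto_interleave hu hv)
  have hEven : Tendsto (fun k : ℕ => 2 * k) atTop atTop :=
    tendsto_id.const_mul_atTop' two_pos
  have hOdd : Tendsto (fun k : ℕ => 2 * k + 1) atTop atTop :=
    (tendsto_add_atTop_nat 1).comp hEven
  have hac : a = c := tendsto_nhds_unique hGu <| (hc.comp hEven).congr fun k => by
    simp [Nat.mul_div_cancel_left k two_pos]
  have hbc : b = c := tendsto_nhds_unique hGv <| (hc.comp hOdd).congr fun k => by
    simp [Nat.mul_add_div two_pos]
  rw [hac, hbc]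

end Interleave

section Window

variable {A : Set ℝ}

theorem ind_mem_Icc (A : Set ℝ) (x : ℝ) : ind A x ∈ Icc (0 : ℝ) 1 := by
  unfold ind
  by_cases hx : x ∈ A <;> simp [hx]

theorem ind_eq_ind_of_iff {B : Set ℝ} {x y : ℝ} (h : x ∈ A ↔ y ∈ B) : ind A x = ind B y := by
  classical
  simp only [ind, indicator_apply, h]

theorem intervalIntegrable_ind (hA : MeasurableSet A) (a b : ℝ) :
    IntervalIntegrable (ind A) volume a b :=
  ⟨(integrableOn_const measure_Ioc_lt_top.ne).indicator hA,
    (integrableOn_const measure_Ioc_lt_top.ne).indicator hA⟩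

theorem abs_integral_ind_le (A : Set ℝ) (a b : ℝ) :
    |∫ y in a..b, ind A y| ≤ |b - a| := by
  simpa using intervalIntegral.norm_integral_le_of_norm_le_const (a := a) (b := b)
    (C := 1) (f := ind A) fun x _ => by
      rw [Real.norm_eq_abs, abs_of_nonneg (ind_mem_Icc A x).1]; exact (ind_mem_Icc A x).2

theorem sigmaFn_mem_Icc (A : Set ℝ) {D : ℝ} (hD : 0 ≤ D) (x : ℝ) :
    sigmaFn A D x ∈ Icc (0 : ℝ) 1 := by
  have hint : 0 ≤ ∫ y in x..x + D, ind A y :=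
    intervalIntegral.integral_nonneg (by linarith) fun y _ => (ind_mem_Icc A y).1
  have hle : (∫ y in x..x + D, ind A y) ≤ D := by
    simpa [abs_of_nonneg hint, abs_of_nonneg hD] using abs_integral_ind_le A x (x + D)
  rw [sigmaFn, one_div_mul_eq_div]
  exact ⟨div_nonneg hint hD, div_le_one_of_le₀ hle hD⟩

theorem abs_sigmaFn_sub_sigmaFn_le (hA : MeasurableSet A) {D : ℝ} (hD : 0 < D) (x x' : ℝ) :
    |sigmaFn A D x - sigmaFn A D x'| ≤ 2 * |x' - x| / D := by
  have hint := intervalIntegrable_ind hA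
  have hshift : (∫ y in x..x + D, ind A y) - ∫ y in x'..x' + D, ind A y
      = (∫ y in x..x', ind A y) - ∫ y in x + D..x' + D, ind A y :=
    intervalIntegral.integral_interval_sub_interval_comm (hint _ _) (hint _ _) (hint _ _)
  have hbound : |(∫ y in x..x', ind A y) - ∫ y in x + D..x' + D, ind A y| ≤ 2 * |x' - x| := by
    have h1 := abs_integral_ind_le A x x'
    have h2 := abs_integral_ind_le A (x + D) (x' + D)
    rw [show x' + D - (x + D) = x' - x by ring] at h2
    linarith [abs_sub (∫ y in x..x', ind A y) (∫ y in x + D..x' + D, ind A y)]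
  rw [sigmaFn, sigmaFn, ← mul_sub, hshift, abs_mul, abs_of_pos (one_div_pos.2 hD),
    one_div_mul_eq_div]
  exact div_le_div_of_nonneg_right hbound hD.le

theorem rho_eq_sigmaFn (A : Set ℝ) (x : ℝ) : rho A x = sigmaFn A x 0 := by
  rcases eq_or_ne x 0 with rfl | hx
  · simp [rho, sigmaFn]
  · simp [rho, sigmaFn, hx]

theorem continuousOn_rho (hA : MeasurableSet A) : ContinuousOn (rho A) (Ioi 0) := by
  have hprim : Continuous fun x => ∫ y in (0 : ℝ)..x, ind A y :=
    intervalIntegral.continuous_primitive (intervalIntegrable_ind hA) 0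
  refine ((continuousOn_inv₀.mono fun x hx => (ne_of_gt (mem_Ioi.1 hx))).mul
    hprim.continuousOn).congr fun x hx => ?_
  simp [rho, ne_of_gt (mem_Ioi.1 hx)]

end Window

section Mcal

variable {A : Set ℝ}

theorem measurableSet_of_mem_Mcal (hA : A ∈ Mcal) : MeasurableSet A := by
  obtain ⟨a, -, -, rfl⟩ := hA
  exact MeasurableSet.iUnion fun _ => measurableSet_Ico

theorem mem_logSet {t : ℝ} : t ∈ logSet A ↔ 0 ≤ t ∧ Real.exp t ∈ A := by
  constructor
  · rintro ⟨z, ⟨hzA, hz1⟩, rfl⟩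
    exact ⟨Real.log_nonneg hz1, by rwa [Real.exp_log (by linarith [mem_Ici.1 hz1])]⟩
  · rintro ⟨ht, hA⟩
    exact ⟨Real.exp t, ⟨hA, Real.one_le_exp ht⟩, Real.log_exp t⟩

theorem ind_logSet {t : ℝ} (ht : 0 ≤ t) : ind (logSet A) t = ind A (Real.exp t) :=
  ind_eq_ind_of_iff (by rw [mem_logSet]; exact and_iff_right ht)

theorem logSet_mem_Mcal (hA : A ∈ Mcal) : logSet A ∈ Mcal := by
  obtain ⟨a, -, ha, rfl⟩ := hA
  have hpos : ∀ i, 0 < max (a i) 1 := fun i => lt_max_of_lt_right one_pos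
  refine ⟨fun i => Real.log (max (a i) 1), Real.log_nonneg (le_max_right _ _),
    fun i j hij => Real.log_le_log (hpos i) (max_le_max_right 1 (ha hij)), ?_⟩
  ext t
  simp only [mem_logSet, mem_iUnion, mem_Ico, Real.log_le_iff_le_exp (hpos _),
    Real.lt_log_iff_exp_lt (hpos _), max_le_iff, lt_max_iff]
  constructor
  · rintro ⟨ht, i, hi⟩
    exact ⟨i, ⟨hi.1, Real.one_le_exp ht⟩, Or.inl hi.2⟩
  · rintro ⟨i, ⟨hi, h1⟩, hi'⟩
    have ht : 0 ≤ t := by simpa using h1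
    exact ⟨ht, i, hi, hi'.resolve_right (not_lt.2 (Real.one_le_exp ht))⟩

theorem exists_forall_le_iff_le_of_monotone {a : ℕ → ℝ} (ha : Monotone a) (x : ℝ) :
    ∃ δ > 0, ∀ y ∈ Ico x (x + δ), ∀ n, a n ≤ y ↔ a n ≤ x := by
  classical
  by_cases h : ∃ n, x < a n
  · refine ⟨a (Nat.find h) - x, sub_pos.2 (Nat.find_spec h), fun y hy n => ?_⟩
    rcases lt_or_ge n (Nat.find h) with hn | hn
    · have := not_lt.1 (Nat.find_min h hn)
      exact ⟨fun _ => this, fun _ => this.trans hy.1⟩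
    · have := ha hn
      constructor <;> intro <;> linarith [hy.2, Nat.find_spec h]
  · simp only [not_exists, not_lt] at h
    exact ⟨1, one_pos, fun y hy n => ⟨fun _ => h n, fun _ => (h n).trans hy.1⟩⟩

theorem continuousWithinAt_ind_Ici (hA : A ∈ Mcal) (x : ℝ) :
    ContinuousWithinAt (ind A) (Ici x) x := by
  obtain ⟨a, -, ha, rfl⟩ := hA
  obtain ⟨δ, hδ, hle⟩ := exists_forall_le_iff_le_of_monotone ha x
  have hmem : ∀ y ∈ Ico x (x + δ),
      (y ∈ ⋃ i, Ico (a (2 * i)) (a (2 * i + 1)) ↔ x ∈ ⋃ i, Ico (a (2 * i)) (a (2 * i + 1))) := by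
    intro y hy
    simp only [mem_iUnion, mem_Ico, ← not_le, hle y hy]
  refine continuousWithinAt_const.congr_of_eventuallyEq
    (mem_of_superset (Ico_mem_nhdsGE (lt_add_of_pos_right x hδ)) fun y hy => ?_) rfl
  exact ind_eq_ind_of_iff (hmem y hy)

end Mcal

section LogScale

variable {A : Set ℝ}

theorem hasDerivWithinAt_rho (hA : A ∈ Mcal) {x : ℝ} (hx : 0 < x) :
    HasDerivWithinAt (rho A) ((ind A x - rho A x) / x) (Ici x) x := by
  have hprim : HasDerivWithinAt (fun u => ∫ y in (0 : ℝ)..u, ind A y) (ind A x) (Ici x) x :=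
    intervalIntegral.integral_hasDerivWithinAt_right (t := Ioi x)
      (intervalIntegrable_ind (measurableSet_of_mem_Mcal hA) 0 x)
      (((measurable_const.indicator (measurableSet_of_mem_Mcal hA)).stronglyMeasurable
        ).stronglyMeasurableAtFilter)
      ((continuousWithinAt_ind_Ici hA x).mono Ioi_subset_Ici_self)
  have hquot := ((hasDerivAt_inv hx.ne').hasDerivWithinAt (s := Ici x)).mul hprim
  have hrho : rho A =ᶠ[𝓝[Ici x] x] fun u => u⁻¹ * ∫ y in (0 : ℝ)..u, ind A y :=
    eventually_nhdsWithin_of_eventually_nhds <| (lt_mem_nhds hx).mono fun u hu => by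
      simp [rho, hu.ne']
  refine (hquot.congr_of_eventuallyEq hrho (by simp [rho, hx.ne'])).congr_deriv ?_
  simp only [rho, hx.ne', if_false]
  field_simp
  ring

theorem hasDerivWithinAt_rho_exp (hA : A ∈ Mcal) (u : ℝ) :
    HasDerivWithinAt (fun v => rho A (Real.exp v)) (ind A (Real.exp u) - rho A (Real.exp u))
      (Ici u) u := by
  have h := (hasDerivWithinAt_rho hA (Real.exp_pos u)).comp u
    (Real.hasDerivAt_exp u).hasDerivWithinAt fun v hv => Real.exp_le_exp.2 hv
  rwa [div_mul_cancel₀ _ (Real.exp_ne_zero u)] at h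

theorem continuous_rho_exp (hA : MeasurableSet A) : Continuous fun u => rho A (Real.exp u) :=
  (continuousOn_rho hA).comp_continuous Real.continuous_exp Real.exp_pos

theorem integral_ind_logSet (hA : A ∈ Mcal) {a b : ℝ} (ha : 0 ≤ a) (hab : a ≤ b) :
    ∫ u in a..b, ind (logSet A) u
      = (∫ u in a..b, rho A (Real.exp u)) + (rho A (Real.exp b) - rho A (Real.exp a)) := by
  have hcont := continuous_rho_exp (measurableSet_of_mem_Mcal hA)
  have hind := intervalIntegrable_ind (measurableSet_of_mem_Mcal (logSet_mem_Mcal hA)) a b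
  have hftc := intervalIntegral.integral_eq_sub_of_hasDeriv_right_of_le hab hcont.continuousOn
    (fun u hu => by
      rw [ind_logSet (ha.trans hu.1.le)]
      exact (hasDerivWithinAt_rho_exp hA u).mono Ioi_subset_Ici_self)
    (hind.sub (hcont.intervalIntegrable a b))
  rw [intervalIntegral.integral_sub hind (hcont.intervalIntegrable a b)] at hftc
  linarith

theorem xi_exp_exp (hA : MeasurableSet A) (T y : ℝ) :
    xi A (Real.exp T) (Real.exp y) = (1 / T) * ∫ u in y..y + T, rho A (Real.exp u) := by
  have hsub := intervalIntegral.integral_deriv_smul_comp' (a := y) (b := y + T)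
    (g := fun t => rho A t / t) (fun u _ => Real.hasDerivAt_exp u)
    Real.continuous_exp.continuousOn
    (((continuousOn_rho hA).div continuousOn_id fun t ht => ne_of_gt ht).mono
      (image_subset_iff.2 fun u _ => Real.exp_pos u))
  rw [xi, Real.log_exp, ← Real.exp_add, add_comm T, ← hsub]
  congr 2
  funext u
  simp only [smul_eq_mul, Function.comp_apply]
  field_simp

theorem abs_xi_exp_exp_sub_sigmaFn_le (hA : A ∈ Mcal) {T y : ℝ} (hT : 0 < T) (hy : 0 ≤ y) :
    |xi A (Real.exp T) (Real.exp y) - sigmaFn (logSet A) T y| ≤ T⁻¹ := by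
  have hbound : |rho A (Real.exp (y + T)) - rho A (Real.exp y)| ≤ 1 := by
    have h1 := sigmaFn_mem_Icc A (Real.exp_pos (y + T)).le 0
    have h2 := sigmaFn_mem_Icc A (Real.exp_pos y).le 0
    rw [← rho_eq_sigmaFn] at h1 h2
    rw [abs_le]
    constructor <;> linarith [h1.1, h1.2, h2.1, h2.2]
  rw [xi_exp_exp (measurableSet_of_mem_Mcal hA), sigmaFn,
    integral_ind_logSet hA hy (by linarith), ← mul_sub, sub_add_cancel_left, abs_mul, abs_neg,
    abs_of_pos (one_div_pos.2 hT), one_div]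
  exact mul_le_of_le_one_right (inv_nonneg.2 hT.le) hbound

end LogScale

section UniformDensity

variable {A B : Set ℝ}

theorem eventually_sigmaFn_mem_Icc (B : Set ℝ) :
    ∀ᶠ D in atTop, ∀ x : Ioi (0 : ℝ), sigmaFn B D x ∈ Icc (0 : ℝ) 1 :=
  (eventually_ge_atTop 0).mono fun _ hD x => sigmaFn_mem_Icc B hD x

theorem tendsto_sigmaFn_of_mem_Wuni (hB : B ∈ Wuni) :
    Tendsto (Function.uncurry fun D (x : Ioi (0 : ℝ)) => sigmaFn B D x) (atTop ×ˢ ⊤)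
      (𝓝 (Ufn B)) :=
  tendsto_uncurry_prod_top_of_liminf_eq_limsup (eventually_sigmaFn_mem_Icc B) hB.2 rfl

theorem tendsto_rho_of_mem_Wuni (hB : B ∈ Wuni) : Tendsto (rho B) atTop (𝓝 (Ufn B)) := by
  -- `ρ_B D = σ_B(D, 0)`, but `U` and `L` only see windows starting at `x > 0`
  have hone : Tendsto (fun D => sigmaFn B D 1) atTop (𝓝 (Ufn B)) :=
    (tendsto_sigmaFn_of_mem_Wuni hB).comp
      (tendsto_id.prodMk (tendsto_top (f := fun _ => (⟨1, mem_Ioi.2 one_pos⟩ : Ioi (0 : ℝ)))))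
  have hshift : Tendsto (fun D => sigmaFn B D 0 - sigmaFn B D 1) atTop (𝓝 0) :=
    squeeze_zero_norm' ((eventually_gt_atTop 0).mono fun D hD =>
        abs_sigmaFn_sub_sigmaFn_le (measurableSet_of_mem_Mcal hB.1) hD 0 1)
      (tendsto_const_nhds.div_atTop tendsto_id)
  rw [← zero_add (Ufn B)]
  exact (hshift.add hone).congr fun D => by rw [sub_add_cancel, rho_eq_sigmaFn]

theorem tendsto_xi_exp_exp_sub_sigmaFn {ι : Type*} {l : Filter ι} (hA : A ∈ Mcal)
    {T y : ι → ℝ} (hT : Tendsto T l atTop) (hy : ∀ i, 0 ≤ y i) :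
    Tendsto (fun i => xi A (Real.exp (T i)) (Real.exp (y i)) - sigmaFn (logSet A) (T i) (y i))
      l (𝓝 0) :=
  squeeze_zero_norm' ((hT.eventually_gt_atTop 0).mono fun i hi =>
    abs_xi_exp_exp_sub_sigmaFn_le hA hi (hy i)) (tendsto_inv_atTop_zero.comp hT)

theorem tendsto_xi_of_mem_Auni (hA : A ∈ Auni) {s f : ℕ → ℝ} (hsf : memP s f) :
    Tendsto (fun n => xi A (s n) (f n)) atTop (𝓝 (Ufn (logSet A))) := by
  obtain ⟨hs1, hs, hf1⟩ := hsf
  let y : ℕ → Ioi (0 : ℝ) := fun n => ⟨Real.log (f n), Real.log_pos (hf1 n)⟩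
  have hT : Tendsto (fun n => Real.log (s n)) atTop atTop := Real.tendsto_log_atTop.comp hs
  have hsigma := (tendsto_sigmaFn_of_mem_Wuni hA.2).comp (hT.prodMk (tendsto_top (f := y)))
  have hdiff := tendsto_xi_exp_exp_sub_sigmaFn hA.1 hT fun n => (y n).2.le
  simpa [y, Real.exp_log, (one_pos.trans (hs1 _)), (one_pos.trans (hf1 _))] using
    hdiff.add hsigma

theorem exists_tendsto_sigmaFn_logSet_comp (hA : A ∈ Mcal)
    (H : ∀ s f : ℕ → ℝ, memP s f → A ∈ Asf s f) {q : ℕ → ℝ × Ioi (0 : ℝ)}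
    (hq : Tendsto q atTop (atTop ×ˢ ⊤)) :
    ∃ c, Tendsto (Function.uncurry (fun D (x : Ioi (0 : ℝ)) => sigmaFn (logSet A) D x) ∘ q)
      atTop (𝓝 c) := by
  have hq1 : Tendsto (fun n => (q n).1) atTop atTop := tendsto_fst.comp hq
  -- `max _ 1` keeps every `s n` above `1` without changing the tail of the sequence
  let T : ℕ → ℝ := fun n => max (q n).1 1
  have hT : Tendsto T atTop atTop := tendsto_atTop_mono (fun n => le_max_left _ _) hq1
  have hmem : memP (fun n => Real.exp (T n)) (fun n => Real.exp (q n).2) :=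
    ⟨fun n => Real.one_lt_exp_iff.2 (one_pos.trans_le (le_max_right _ _)),
      Real.tendsto_exp_atTop.comp hT, fun n => Real.one_lt_exp_iff.2 (q n).2.2⟩
  obtain ⟨-, c, hc⟩ := H _ _ hmem
  refine ⟨c, ?_⟩
  have hlim := hc.sub (tendsto_xi_exp_exp_sub_sigmaFn hA hT fun n => (q n).2.2.le)
  rw [sub_zero] at hlim
  refine hlim.congr' ((hq1.eventually_ge_atTop 1).mono fun n hn => ?_)
  simp [T, max_eq_left hn, Function.uncurry]

theorem Lfn_logSet_eq_Ufn (hA : A ∈ Mcal) (H : ∀ s f : ℕ → ℝ, memP s f → A ∈ Asf s f) :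
    Lfn (logSet A) = Ufn (logSet A) :=
  eq_of_mapClusterPt_of_forall_seq (mapClusterPt_liminf_iInf (eventually_sigmaFn_mem_Icc _))
    (mapClusterPt_limsup_iSup (eventually_sigmaFn_mem_Icc _))
    fun _ hq => exists_tendsto_sigmaFn_logSet_comp hA H hq

end UniformDensity

/-- Alternate representation: `𝓐^uni = ⋂_{(s,f)∈𝓟} 𝓐^{s,f}`, and for every
`(s,f) ∈ 𝓟` and `A ∈ 𝓐^uni`, `α(A) = α^{s,f}(A)`. -/
theorem stmt9 :
    (∀ A : Set ℝ, A ∈ Auni ↔ ∀ s f : ℕ → ℝ, memP s f → A ∈ Asf s f) ∧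
    (∀ s f : ℕ → ℝ, memP s f → ∀ A ∈ Auni, alphaFn A = alphasf s f A) := by
  have hP : memP (fun n => (n : ℝ) + 2) fun _ => 2 :=
    ⟨fun n => by linarith [n.cast_nonneg (α := ℝ)],
      tendsto_atTop_add_const_right _ _ tendsto_natCast_atTop_atTop, fun _ => one_lt_two⟩
  refine ⟨fun A => ⟨fun hA s f hsf => ⟨hA.1, _, tendsto_xi_of_mem_Auni hA hsf⟩, fun H => ?_⟩,
    fun s f hsf A hA => ?_⟩
  · have hM : A ∈ Mcal := (H _ _ hP).1
    exact ⟨hM, logSet_mem_Mcal hM, Lfn_logSet_eq_Ufn hM H⟩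
  · rw [alphaFn, lam, alphasf, (tendsto_rho_of_mem_Wuni hA.2).limUnder_eq,
      (tendsto_xi_of_mem_Auni hA hsf).limUnder_eq]

end UPN
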